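/- arXiv:1908.04263 — 4 statements merged into one kernel-verified Lean document; each statement's English description precedes it below -/
import Mathlib

section
/- With notation as in the cyclotomic number setup, e^2 · (a,b)_e = Σ_{i=0}^{e-1} Σ_{j=0}^{e-1} ζ_e^{-(ai+bj)} · J_e(i,j) (inversion formula expressing cyclotomic numbers from Jacobi sums). -/
/-! Expanding the Jacobi sums and exchanging the order of summation, the double sum becomes
`∑ v, S_a(v) * S_b(v + 1)` with `S_c(u) = ∑ i, ζ^(-c i) χ(u)^i`. Writing `u = γ^m`, `S_c(u)` is
a geometric sum in `ζ^(m - c)`, hence equal to `e` when `ind_γ u ≡ c (mod e)` and to `0`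
otherwise (also for `u = 0`). So exactly the `v` counted by `(a,b)_e` contribute, each with
`e²`. -/

/-- The cyclotomic number `(a,b)_e` over a finite field `F` with respect to a
generator `γ` of `Fˣ`. -/
noncomputable def cyclo {F : Type*} [Field F] [Fintype F] (γ : Fˣ) (e : ℕ)
    (a b : ZMod e) : ℕ :=
  Nat.card {v : F // ∃ m n : ℕ, (γ : F) ^ m = v ∧ (γ : F) ^ n = v + 1 ∧
    (m : ZMod e) = a ∧ (n : ZMod e) = b}

open Finset

theorem IsPrimitiveRoot.sum_range_zpow_mul {K : Type*} [Field K] {ζ : K} {e : ℕ}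
    (hζ : IsPrimitiveRoot ζ e) (c : ℤ) :
    ∑ i ∈ range e, ζ ^ (c * i) = if (e : ℤ) ∣ c then (e : K) else 0 := by
  simp_rw [zpow_mul, zpow_natCast]
  split_ifs with hc
  · simp [(hζ.zpow_eq_one_iff_dvd c).mpr hc]
  · have hζc : (ζ ^ c) ^ e = 1 := by
      rw [← zpow_natCast, ← zpow_mul, mul_comm, zpow_mul, zpow_natCast, hζ.pow_eq_one, one_zpow]
    rw [geom_sum_eq (mt (hζ.zpow_eq_one_iff_dvd c).mp hc), hζc, sub_self, zero_div]

theorem natCast_zmod_eq_of_pow_eq_pow {G : Type*} [LeftCancelMonoid G] {γ : G} {e m n : ℕ}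
    (he : e ∣ orderOf γ) (h : γ ^ m = γ ^ n) : (m : ZMod e) = n :=
  (ZMod.natCast_eq_natCast_iff _ _ _).mpr ((pow_eq_pow_iff_modEq.mp h).of_dvd he)

section IndexMod

variable {F : Type*} [Field F]

def HasIndexMod (γ : Fˣ) (e : ℕ) (c : ZMod e) (u : F) : Prop :=
  ∃ m : ℕ, (γ : F) ^ m = u ∧ (m : ZMod e) = c

theorem not_hasIndexMod_zero (γ : Fˣ) (e : ℕ) (c : ZMod e) : ¬ HasIndexMod γ e c (0 : F) :=
  fun ⟨m, hm, _⟩ => pow_ne_zero m γ.ne_zero hm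

theorem hasIndexMod_pow_iff {γ : Fˣ} {e : ℕ} (he : e ∣ orderOf γ) (c : ZMod e) (m : ℕ) :
    HasIndexMod γ e c ((γ : F) ^ m) ↔ (m : ZMod e) = c := by
  refine ⟨fun ⟨n, hn, hnc⟩ => ?_, fun h => ⟨m, rfl, h⟩⟩
  rw [← hnc]
  exact natCast_zmod_eq_of_pow_eq_pow he (Units.ext (by simpa using hn.symm))

theorem cyclo_eq_card [Fintype F] (γ : Fˣ) (e : ℕ) (a b : ZMod e) :
    cyclo γ e a b = Nat.card {v : F // HasIndexMod γ e a v ∧ HasIndexMod γ e b (v + 1)} :=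
  Nat.card_congr <| Equiv.subtypeEquivRight fun _ =>
    ⟨fun ⟨m, n, hm, hn, hma, hnb⟩ => ⟨⟨m, hm, hma⟩, n, hn, hnb⟩,
      fun ⟨⟨m, hm, hma⟩, n, hn, hnb⟩ => ⟨m, n, hm, hn, hma, hnb⟩⟩

end IndexMod

theorem pos_of_dvd_card_sub_one {F : Type*} [Field F] [Fintype F] {e : ℕ}
    (hdvd : e ∣ Fintype.card F - 1) : 0 < e :=
  Nat.pos_of_dvd_of_pos hdvd (Nat.sub_pos_of_lt Fintype.one_lt_card)

theorem exists_pow_eq_of_ne_zero {F : Type*} [Field F] [Finite F] {γ : Fˣ}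
    (hγ : ∀ x : Fˣ, x ∈ Subgroup.zpowers γ) {u : F} (hu : u ≠ 0) :
    ∃ m : ℕ, (γ : F) ^ m = u := by
  obtain ⟨m, hm⟩ := mem_powers_iff_mem_zpowers.mpr (hγ (Units.mk0 u hu))
  exact ⟨m, by simpa using congrArg Units.val hm⟩

open scoped Classical in
theorem sum_range_zpow_neg_mul_char_pow {F K : Type*} [Field F] [Fintype F] [DecidableEq F]
    [Field K] {γ : Fˣ} (hγ : ∀ x : Fˣ, x ∈ Subgroup.zpowers γ) {e : ℕ}
    (hdvd : e ∣ Fintype.card F - 1)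
    {ζ : K} (hζ : IsPrimitiveRoot ζ e) {χ : F → K} (hχ : ∀ m : ℕ, χ ((γ : F) ^ m) = ζ ^ m)
    (c : ℕ) (u : F) :
    ∑ i ∈ range e, ζ ^ (-((c : ℤ) * i)) * (if u = 0 then 0 else χ u ^ i) =
      if HasIndexMod γ e c u then (e : K) else 0 := by
  rcases eq_or_ne u 0 with rfl | hu
  · simp [not_hasIndexMod_zero]
  obtain ⟨m, rfl⟩ := exists_pow_eq_of_ne_zero hγ hu
  have hord : orderOf γ = Fintype.card F - 1 := by
    rw [orderOf_eq_card_of_forall_mem_zpowers hγ, Nat.card_eq_fintype_card, Fintype.card_units]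
  have hζ0 : ζ ≠ 0 := hζ.ne_zero (pos_of_dvd_card_sub_one hdvd).ne'
  have hterm : ∀ i : ℕ, ζ ^ (-((c : ℤ) * i)) * (if (γ : F) ^ m = 0 then 0 else χ (γ ^ m) ^ i) =
      ζ ^ (((m : ℤ) - c) * i) := fun i => by
    rw [if_neg hu, hχ, ← pow_mul, ← zpow_natCast, ← zpow_add₀ hζ0]
    congr 1
    push_cast
    ring
  simp_rw [hterm, hζ.sum_range_zpow_mul, hasIndexMod_pow_iff (hord ▸ hdvd),
    ← ZMod.intCast_eq_intCast_iff_dvd_sub, Int.cast_natCast, eq_comm]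

theorem cyclotomic_eq_inv_sum_jacobi_general
    {F : Type*} [Field F] [Fintype F] [DecidableEq F]
    (e : ℕ) (hdvd : e ∣ Fintype.card F - 1)
    (γ : Fˣ) (hγ : ∀ x : Fˣ, x ∈ Subgroup.zpowers γ)
    (ζ : ℂ) (hζ : IsPrimitiveRoot ζ e)
    (χ : F → ℂ) (hχ : ∀ m : ℕ, χ ((γ : F) ^ m) = ζ ^ m)
    (a b : ℕ) :
    (∑ i ∈ Finset.range e, ∑ j ∈ Finset.range e,
        ζ ^ (-((a : ℤ) * i + (b : ℤ) * j)) *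
          (∑ v : F, (if v = 0 then 0 else χ v ^ i) *
            (if v + 1 = 0 then 0 else χ (v + 1) ^ j))) =
      (e : ℂ) ^ 2 * (cyclo γ e (a : ZMod e) (b : ZMod e) : ℂ) := by
  classical
  have hζ0 : ζ ≠ 0 := hζ.ne_zero (pos_of_dvd_card_sub_one hdvd).ne'
  calc _ = ∑ v : F,
          (∑ i ∈ range e, ζ ^ (-((a : ℤ) * i)) * (if v = 0 then 0 else χ v ^ i)) *
            (∑ j ∈ range e, ζ ^ (-((b : ℤ) * j)) *
              (if v + 1 = 0 then 0 else χ (v + 1) ^ j) : ℂ) := by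
        simp_rw [sum_mul_sum, mul_sum]
        symm
        rw [sum_comm]
        refine sum_congr rfl fun i _ => ?_
        rw [sum_comm]
        refine sum_congr rfl fun j _ => sum_congr rfl fun v _ => ?_
        rw [neg_add, zpow_add₀ hζ0]
        ring
    _ = ∑ v : F, (if HasIndexMod γ e a v then (e : ℂ) else 0) *
          (if HasIndexMod γ e b (v + 1) then (e : ℂ) else 0) := by
        simp_rw [sum_range_zpow_neg_mul_char_pow hγ hdvd hζ hχ]
    _ = (e : ℂ) ^ 2 * (cyclo γ e (a : ZMod e) (b : ZMod e) : ℂ) := by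
        simp_rw [ite_zero_mul_ite_zero, sum_ite, sum_const_zero, add_zero, sum_const,
          cyclo_eq_card, Nat.card_eq_fintype_card, Fintype.card_subtype, nsmul_eq_mul, sq,
          mul_comm]

/-- Inversion formula: `Σ_i Σ_j ζ_e^{-(ai+bj)} J_e(i,j) = e² (a,b)_e`. -/
theorem cyclotomic_eq_inv_sum_jacobi
    {F : Type*} [Field F] [Fintype F] [DecidableEq F]
    (p r : ℕ) (hp : p.Prime) (hpodd : Odd p) (hcard : Fintype.card F = p ^ r)
    (e : ℕ) (he : 2 ≤ e) (hdvd : e ∣ Fintype.card F - 1)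
    (γ : Fˣ) (hγ : ∀ x : Fˣ, x ∈ Subgroup.zpowers γ)
    (ζ : ℂ) (hζ : IsPrimitiveRoot ζ e)
    (χ : F → ℂ) (hχ0 : χ 0 = 0) (hχ : ∀ m : ℕ, χ ((γ : F) ^ m) = ζ ^ m)
    (a b : ℕ) (ha : a ≤ e - 1) (hb : b ≤ e - 1) :
    (∑ i ∈ Finset.range e, ∑ j ∈ Finset.range e,
        ζ ^ (-((a : ℤ) * i + (b : ℤ) * j)) *
          (∑ v : F, (if v = 0 then 0 else χ v ^ i) *
            (if v + 1 = 0 then 0 else χ (v + 1) ^ j))) =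
      (e : ℂ) ^ 2 * (cyclo γ e (a : ZMod e) (b : ZMod e) : ℂ) :=
  cyclotomic_eq_inv_sum_jacobi_general e hdvd γ hγ ζ hζ χ hχ a b
end

section
/- Consider the group G of order 6 acting on (ℤ/eℤ)² generated by (a,b) ↦ (b,a) and (a,b) ↦ (e-a, b-a). For e = l² with prime l ≥ 5, the action has exactly 1 fixed point, (l²-1) orbits of size 3, and all remaining orbits of size 6; in total there are l² + (l²-1)(l²-2)/6 orbits. -/
/-!
The orbit of `(a, b)` under `⟨σ, τ⟩ ≅ S₃` is the explicit set
`{(a,b), (b,a), (b-a,-a), (-b,a-b), (-a,b-a), (a-b,-b)}`. When `6` is a unit these six points are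
distinct unless `(a, b)` lies on one of the mirrors `a = b`, `a = 0`, `b = 0` of the three
reflections; such a point lies in the orbit `{(c,c), (0,-c), (-c,0)}` of a unique diagonal point
`(c, c)`. Hence the only fixed point is `0`, the orbits of size `3` are indexed by `c ≠ 0`, and
counting points, `e² = 1 + 3 (e - 1) + 6 N₆`, gives the number `N₆` of free orbits.
-/

/-- `σ(a,b) = (b,a)`. -/
def sigmaPerm (e : ℕ) : Equiv.Perm (ZMod e × ZMod e) := Equiv.prodComm _ _

/-- `τ(a,b) = (e-a, b-a)`. -/
def tauPerm (e : ℕ) : Equiv.Perm (ZMod e × ZMod e) :=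
  Function.Involutive.toPerm (fun x => (-x.1, x.2 - x.1)) (fun x => by simp)

/-- The group generated by `σ` and `τ`. -/
def Gst (e : ℕ) : Subgroup (Equiv.Perm (ZMod e × ZMod e)) :=
  Subgroup.closure {sigmaPerm e, tauPerm e}

open MulAction
open scoped Pointwise

theorem MulAction.card_eq_sum_card_orbit_eq {G X : Type*} [Group G] [MulAction G X] [Finite X]
    {s : Finset ℕ} (hs : ∀ ω : orbitRel.Quotient G X, Nat.card ω.orbit ∈ s) :
    Nat.card X = ∑ k ∈ s, k * Nat.card {ω : orbitRel.Quotient G X // Nat.card ω.orbit = k} := by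
  classical
  have := Fintype.ofFinite (orbitRel.Quotient G X)
  rw [Nat.card_congr (selfEquivSigmaOrbits' G X), Nat.card_sigma,
    ← Finset.sum_fiberwise_of_maps_to (fun ω _ => hs ω)]
  refine Finset.sum_congr rfl fun k _ => ?_
  rw [Finset.sum_const_nat fun ω hω => (Finset.mem_filter.mp hω).2, mul_comm,
    Nat.card_eq_fintype_card, Fintype.card_subtype]

theorem Nat.card_eq_sum_card_fiberwise {α β : Type*} [Finite α] [DecidableEq β] {f : α → β}
    {s : Finset β} (hs : ∀ a, f a ∈ s) : Nat.card α = ∑ b ∈ s, Nat.card {a // f a = b} := by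
  classical
  have := Fintype.ofFinite α
  simp only [Nat.card_eq_fintype_card, Fintype.card_subtype]
  exact Finset.card_eq_sum_card_fiberwise fun a _ => hs a

theorem Equiv.Perm.mem_stabilizer_of_involutive {α : Type*} {g : Equiv.Perm α}
    (hg : Function.Involutive g) {S : Set α} (hS : Set.MapsTo g S S) :
    g ∈ stabilizer (Equiv.Perm α) S :=
  mem_stabilizer_set.mpr fun y => ⟨fun hy => hg y ▸ hS hy, fun hy => hS hy⟩

namespace Gst

section CommRing

variable {R : Type*} [CommRing R]

def orbitSet (x : R × R) : Set (R × R) :=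
  {x, (x.2, x.1), (x.2 - x.1, -x.1), (-x.2, x.1 - x.2), (-x.1, x.2 - x.1), (x.1 - x.2, -x.2)}

theorem orbitSet_zero : orbitSet (0 : R × R) = {0} := by
  simp [orbitSet, Prod.ext_iff]

theorem orbitSet_diag (a : R) : orbitSet (a, a) = {(a, a), (0, -a), (-a, 0)} := by
  ext y
  simp only [orbitSet, sub_self, Set.mem_insert_iff, Set.mem_singleton_iff]
  tauto

theorem eq_of_diag_mem_orbitSet_diag {a b : R} (h : (b, b) ∈ orbitSet (a, a)) : b = a := by
  simp only [orbitSet_diag, Set.mem_insert_iff, Set.mem_singleton_iff, Prod.ext_iff] at h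
  grind

theorem ncard_orbitSet_diag {a : R} (ha : a ≠ 0) : (orbitSet (a, a)).ncard = 3 := by
  rw [orbitSet_diag, Set.ncard_eq_three]
  refine ⟨_, _, _, ?_, ?_, ?_, rfl⟩ <;> simp [ha]

theorem ncard_orbitSet (h6 : IsUnit (6 : R)) {a b : R} (hab : a ≠ b) (ha : a ≠ 0) (hb : b ≠ 0) :
    (orbitSet (a, b)).ncard = 6 := by
  -- any coincidence of two of the six points forces `k a`, `k b` or `k (a - b)` to vanish, `k ∣ 6`
  have ha6 : 6 * a ≠ 0 := h6.mul_right_eq_zero.not.mpr ha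
  have hb6 : 6 * b ≠ 0 := h6.mul_right_eq_zero.not.mpr hb
  have hab6 : 6 * (a - b) ≠ 0 := h6.mul_right_eq_zero.not.mpr (sub_ne_zero.mpr hab)
  rw [orbitSet, Set.ncard_insert_of_notMem, Set.ncard_insert_of_notMem,
    Set.ncard_insert_of_notMem, Set.ncard_insert_of_notMem, Set.ncard_pair] <;>
    simp only [Set.mem_insert_iff, Set.mem_singleton_iff, Prod.ext_iff, ne_eq] <;> grind

end CommRing

variable {e : ℕ}

@[simp] theorem sigmaPerm_apply (x : ZMod e × ZMod e) : sigmaPerm e x = (x.2, x.1) := rfl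

@[simp] theorem tauPerm_apply (x : ZMod e × ZMod e) : tauPerm e x = (-x.1, x.2 - x.1) := rfl

theorem sigmaPerm_mem : sigmaPerm e ∈ Gst e := Subgroup.subset_closure (by simp)

theorem tauPerm_mem : tauPerm e ∈ Gst e := Subgroup.subset_closure (by simp)

theorem le_stabilizer_orbitSet (x : ZMod e × ZMod e) :
    Gst e ≤ stabilizer (Equiv.Perm (ZMod e × ZMod e)) (orbitSet x) := by
  refine (Subgroup.closure_le _).mpr ?_
  rintro g (rfl | rfl) <;>
    refine Equiv.Perm.mem_stabilizer_of_involutive (fun y => by simp) fun y hy => ?_ <;>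
    simp only [orbitSet, sigmaPerm_apply, tauPerm_apply, Set.mem_insert_iff, Set.mem_singleton_iff,
      Prod.ext_iff] at hy ⊢ <;>
    grind

theorem orbit_eq_orbitSet (x : ZMod e × ZMod e) : orbit (Gst e) x = orbitSet x := by
  refine Set.Subset.antisymm ?_ ?_
  · rintro _ ⟨g, rfl⟩
    have hg : (g : Equiv.Perm _) • orbitSet x = orbitSet x := le_stabilizer_orbitSet x g.2
    exact hg ▸ Set.smul_mem_smul_set (Set.mem_insert x _)
  · have hσ : ∀ y ∈ orbit (Gst e) x, sigmaPerm e y ∈ orbit (Gst e) x :=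
      fun _ => mem_orbit_of_mem_orbit (⟨_, sigmaPerm_mem⟩ : Gst e)
    have hτ : ∀ y ∈ orbit (Gst e) x, tauPerm e y ∈ orbit (Gst e) x :=
      fun _ => mem_orbit_of_mem_orbit (⟨_, tauPerm_mem⟩ : Gst e)
    have hx : x ∈ orbit (Gst e) x := mem_orbit_self x
    rintro y (rfl | rfl | rfl | rfl | rfl | rfl)
    · exact hx
    · exact hσ _ hx
    · exact hσ _ (hτ _ hx)
    · exact hτ _ (hσ _ hx)
    · exact hτ _ hx
    · convert hτ _ (hσ _ (hτ _ hx)) using 1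
      simp only [tauPerm_apply, sigmaPerm_apply, Prod.ext_iff]
      constructor <;> ring

theorem card_orbit (x : ZMod e × ZMod e) : Nat.card (orbit (Gst e) x) = (orbitSet x).ncard := by
  rw [orbit_eq_orbitSet, Nat.card_coe_set_eq]

theorem fixedPoints_eq : fixedPoints (Gst e) (ZMod e × ZMod e) = {0} := by
  ext x
  refine ⟨fun hx => ?_, fun hx g => ?_⟩
  · have hσ : (x.2, x.1) = x := hx ⟨_, sigmaPerm_mem⟩
    have hτ : (-x.1, x.2 - x.1) = x := hx ⟨_, tauPerm_mem⟩
    simp only [Prod.ext_iff] at hσ hτ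
    refine Prod.ext ?_ ?_ <;> simp only [Prod.fst_zero, Prod.snd_zero] <;> grind
  · rw [Set.mem_singleton_iff.mp hx]
    simpa [orbit_eq_orbitSet, orbitSet_zero] using mem_orbit (0 : ZMod e × ZMod e) g

theorem exists_diag_mem_orbit {x : ZMod e × ZMod e} (hx : x ≠ 0)
    (h : x.1 = x.2 ∨ x.1 = 0 ∨ x.2 = 0) : ∃ a ≠ 0, (a, a) ∈ orbit (Gst e) x := by
  obtain ⟨a, b⟩ := x
  simp only [orbit_eq_orbitSet, orbitSet, Set.mem_insert_iff, Set.mem_singleton_iff,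
    Prod.ext_iff, ne_eq] at hx h ⊢
  rcases h with rfl | rfl | rfl
  · exact ⟨a, by simpa using hx, by simp⟩
  · exact ⟨-b, by simpa using hx, by simp⟩
  · exact ⟨-a, by simpa using hx, by simp⟩

local notation "Ω" => orbitRel.Quotient (Gst e) (ZMod e × ZMod e)

theorem card_orbit_mk_zero : Nat.card (orbitRel.Quotient.orbit (Quotient.mk'' 0 : Ω)) = 1 := by
  rw [orbitRel.Quotient.orbit_mk, card_orbit, orbitSet_zero, Set.ncard_singleton]

theorem card_orbit_mk_diag {a : ZMod e} (ha : a ≠ 0) :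
    Nat.card (orbitRel.Quotient.orbit (Quotient.mk'' (a, a) : Ω)) = 3 := by
  rw [orbitRel.Quotient.orbit_mk, card_orbit, ncard_orbitSet_diag ha]

theorem mk_diag_injective : Function.Injective fun a : ZMod e => (Quotient.mk'' (a, a) : Ω) := by
  intro a b h
  have hab : (a, a) ∈ orbit (Gst e) (b, b) := orbitRel.Quotient.mem_orbit.mpr h
  exact eq_of_diag_mem_orbitSet_diag (orbit_eq_orbitSet (b, b) ▸ hab)

theorem quotient_cases (h6 : IsUnit (6 : ZMod e)) (ω : Ω) :
    ω = Quotient.mk'' 0 ∨ (∃ a ≠ 0, ω = Quotient.mk'' (a, a)) ∨ Nat.card ω.orbit = 6 := by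
  induction ω using Quotient.inductionOn' with | h x => ?_
  by_cases hx : x = 0
  · exact Or.inl (by rw [hx])
  by_cases h : x.1 = x.2 ∨ x.1 = 0 ∨ x.2 = 0
  · obtain ⟨a, ha, hmem⟩ := exists_diag_mem_orbit hx h
    exact Or.inr (Or.inl ⟨a, ha, (orbitRel.Quotient.mem_orbit.mp hmem).symm⟩)
  · push Not at h
    rw [orbitRel.Quotient.orbit_mk, card_orbit]
    exact Or.inr (Or.inr (ncard_orbitSet h6 h.1 h.2.1 h.2.2))

theorem card_orbit_eq_one_iff (h6 : IsUnit (6 : ZMod e)) (ω : Ω) :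
    Nat.card ω.orbit = 1 ↔ ω = Quotient.mk'' 0 := by
  rcases quotient_cases h6 ω with rfl | ⟨a, ha, rfl⟩ | h
  · exact iff_of_true card_orbit_mk_zero rfl
  · refine iff_of_false (by rw [card_orbit_mk_diag ha]; decide) fun h => ha ?_
    exact mk_diag_injective h
  · refine iff_of_false (by omega) ?_
    rintro rfl
    rw [card_orbit_mk_zero] at h
    omega

theorem card_orbit_eq_three_iff (h6 : IsUnit (6 : ZMod e)) (ω : Ω) :
    Nat.card ω.orbit = 3 ↔ ω ∈ (fun a : ZMod e => (Quotient.mk'' (a, a) : Ω)) '' {0}ᶜ := by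
  rcases quotient_cases h6 ω with rfl | ⟨a, ha, rfl⟩ | h
  · refine iff_of_false (by rw [card_orbit_mk_zero]; decide) ?_
    rintro ⟨a, ha, h⟩
    exact ha (mk_diag_injective h)
  · exact iff_of_true (card_orbit_mk_diag ha) ⟨a, ha, rfl⟩
  · refine iff_of_false (by omega) ?_
    rintro ⟨a, ha, rfl⟩
    rw [card_orbit_mk_diag ha] at h
    omega

theorem card_orbit_mem (h6 : IsUnit (6 : ZMod e)) (ω : Ω) :
    Nat.card ω.orbit = 1 ∨ Nat.card ω.orbit = 3 ∨ Nat.card ω.orbit = 6 := by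
  rcases quotient_cases h6 ω with rfl | ⟨a, ha, rfl⟩ | h
  · exact Or.inl card_orbit_mk_zero
  · exact Or.inr (Or.inl (card_orbit_mk_diag ha))
  · exact Or.inr (Or.inr h)

theorem card_orbits_eq_one (h6 : IsUnit (6 : ZMod e)) :
    Nat.card {ω : Ω // Nat.card ω.orbit = 1} = 1 := by
  rw [Nat.card_congr (Equiv.subtypeEquivRight (card_orbit_eq_one_iff h6))]
  simp

theorem card_orbits_eq_three [NeZero e] (h6 : IsUnit (6 : ZMod e)) :
    Nat.card {ω : Ω // Nat.card ω.orbit = 3} = e - 1 := by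
  rw [Nat.card_congr (Equiv.subtypeEquivRight (card_orbit_eq_three_iff h6)),
    Nat.card_image_of_injective mk_diag_injective, Nat.card_coe_set_eq, Set.ncard_compl,
    Set.ncard_singleton, Nat.card_zmod]

theorem card_quotient [NeZero e] (h6 : IsUnit (6 : ZMod e)) :
    Nat.card Ω = e + (e - 1) * (e - 2) / 6 := by
  have hs : ∀ ω : Ω, Nat.card ω.orbit ∈ ({1, 3, 6} : Finset ℕ) := by simpa using card_orbit_mem h6
  have hX := card_eq_sum_card_orbit_eq hs
  have hΩ := Nat.card_eq_sum_card_fiberwise hs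
  rw [Finset.sum_insert (by decide), Finset.sum_pair (by decide), card_orbits_eq_one h6,
    card_orbits_eq_three h6] at hX hΩ
  rw [Nat.card_prod, Nat.card_zmod] at hX
  have he := NeZero.pos e
  have h6N : (e - 1) * (e - 2) = 6 * Nat.card {ω : Ω // Nat.card ω.orbit = 6} := by
    rcases Nat.lt_or_ge e 2 with he2 | he2
    · obtain rfl : e = 1 := by omega
      omega
    · zify [he, he2] at hX ⊢
      linear_combination hX
  rw [hΩ, h6N, Nat.mul_div_cancel_left _ (by norm_num)]
  omega

end Gst

/-- For `e = l²` with prime `l ≥ 5`, the action of `⟨σ,τ⟩` on `(ℤ/eℤ)²` has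
exactly one fixed point, `l²-1` orbits of size 3, all other orbits of size 6,
and `l² + (l²-1)(l²-2)/6` orbits in total. -/
theorem orbit_count_lsq (l : ℕ) (hl : l.Prime) (hl5 : 5 ≤ l) :
    Nat.card (MulAction.fixedPoints (Gst (l ^ 2)) (ZMod (l ^ 2) × ZMod (l ^ 2))) = 1 ∧
    Nat.card {ω : MulAction.orbitRel.Quotient (Gst (l ^ 2)) (ZMod (l ^ 2) × ZMod (l ^ 2)) //
        Nat.card ω.orbit = 3} = l ^ 2 - 1 ∧
    (∀ ω : MulAction.orbitRel.Quotient (Gst (l ^ 2)) (ZMod (l ^ 2) × ZMod (l ^ 2)),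
        Nat.card ω.orbit = 1 ∨ Nat.card ω.orbit = 3 ∨ Nat.card ω.orbit = 6) ∧
    Nat.card (MulAction.orbitRel.Quotient (Gst (l ^ 2)) (ZMod (l ^ 2) × ZMod (l ^ 2))) =
      l ^ 2 + (l ^ 2 - 1) * (l ^ 2 - 2) / 6 := by
  have : NeZero (l ^ 2) := ⟨pow_ne_zero 2 hl.ne_zero⟩
  have hcop : l.Coprime (2 * 3) :=
    Nat.Coprime.mul_right ((Nat.coprime_primes hl Nat.prime_two).mpr (by omega))
      ((Nat.coprime_primes hl Nat.prime_three).mpr (by omega))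
  have h6 : IsUnit (6 : ZMod (l ^ 2)) := by
    exact_mod_cast (ZMod.isUnit_iff_coprime 6 (l ^ 2)).mpr (hcop.pow_left 2).symm
  refine ⟨?_, Gst.card_orbits_eq_three h6, Gst.card_orbit_mem h6, Gst.card_quotient h6⟩
  rw [Gst.fixedPoints_eq, Nat.card_unique]
end

section
/- For q = p^r = 18k + 1 with k even or q = 2^r, the Jacobi sum of order 18 satisfies J_18(1,n) = (0,0) + (6,12)(ζ^{6+12n} + ζ^{12+6n}) + Σ_{b=1}^{17}(0,b)(ζ^{bn} + ζ^{b} + ζ^{-b(n+1)}) + Σ over representatives (a,b) with 1≤a≤5 of the six-element orbits of (a,b)·(ζ^{an+b} + ζ^{a+bn} + ζ^{a-b(n+1)} + ζ^{an-b(n+1)} + ζ^{bn-a(n+1)} + ζ^{b-a(n+1)}), where ζ = ζ_18 and (a,b) denotes (a,b)_18. -/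
set_option linter.unusedSectionVars false
set_option linter.unusedVariables false

section Sym
variable {F : Type*} [Field F] [Fintype F]

private lemma rot_step (γ : Fˣ) (N : ℕ) (hN1 : γ ^ N = 1) (hN : (18:ℕ) ∣ N) (hNpos : 0 < N)
    (a b a' b' : ZMod 18) (ha' : a' = -a) (hb' : b' = b - a) (v : F)
    (h : ∃ m n : ℕ, (γ : F) ^ m = v ∧ (γ : F) ^ n = v + 1 ∧
      (m : ZMod 18) = a ∧ (n : ZMod 18) = b) :
    ∃ m n : ℕ, (γ : F) ^ m = v⁻¹ ∧ (γ : F) ^ n = v⁻¹ + 1 ∧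
      (m : ZMod 18) = a' ∧ (n : ZMod 18) = b' := by
  obtain ⟨m, mn, h1, h2, hma, hmnb⟩ := h
  have hv0 : v ≠ 0 := by
    rw [← h1, ← Units.val_pow_eq_pow_val]
    exact Units.ne_zero _
  have hNz : ((N : ℕ) : ZMod 18) = 0 := (ZMod.natCast_eq_zero_iff N 18).2 hN
  have hNF : (γ : F) ^ N = 1 := by
    rw [← Units.val_pow_eq_pow_val, hN1, Units.val_one]
  have hmul : (γ : F) ^ m * (γ : F) ^ (m * (N - 1)) = 1 := by
    rw [← pow_add]
    have hexp : m + m * (N - 1) = N * m := by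
      cases N with
      | zero => omega
      | succ t => simp [Nat.succ_sub_one]; ring
    rw [hexp, pow_mul, hNF, one_pow]
  have hinv : (γ : F) ^ (m * (N - 1)) = v⁻¹ := by
    rw [h1] at hmul
    exact eq_inv_of_mul_eq_one_right hmul
  refine ⟨m * (N - 1), mn + m * (N - 1), hinv, ?_, ?_, ?_⟩
  · rw [pow_add, h2, hinv, add_mul, mul_inv_cancel₀ hv0, one_mul, add_comm]
  · have : ((m * (N - 1) : ℕ) : ZMod 18) = (m : ZMod 18) * (((N - 1 : ℕ) : ℕ) : ZMod 18) := by
      push_cast; ring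
    rw [this, Nat.cast_sub hNpos, hNz, Nat.cast_one, zero_sub, hma, ha']
    ring
  · have : ((mn + m * (N - 1) : ℕ) : ZMod 18)
        = (mn : ZMod 18) + (m : ZMod 18) * (((N - 1 : ℕ) : ℕ) : ZMod 18) := by
      push_cast; ring
    rw [this, Nat.cast_sub hNpos, hNz, Nat.cast_one, zero_sub, hma, hmnb, hb']
    ring

lemma cyclo_rot (γ : Fˣ) (N : ℕ) (hN1 : γ ^ N = 1) (hN : (18:ℕ) ∣ N) (hNpos : 0 < N)
    (a b : ZMod 18) : cyclo γ 18 a b = cyclo γ 18 (-a) (b - a) := by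
  refine Nat.card_congr ⟨fun x => ⟨x.1⁻¹, rot_step γ N hN1 hN hNpos a b _ _ rfl rfl x.1 x.2⟩,
    fun x => ⟨x.1⁻¹, rot_step γ N hN1 hN hNpos (-a) (b - a) a b (by ring) (by ring) x.1 x.2⟩,
    fun x => Subtype.ext (inv_inv _), fun x => Subtype.ext (inv_inv _)⟩

private lemma swap_step (γ : Fˣ) (j : ℕ) (hj : (γ : F) ^ j = -1) (hj18 : ((j : ℕ) : ZMod 18) = 0)
    (a b : ZMod 18) (v : F)
    (h : ∃ m n : ℕ, (γ : F) ^ m = v ∧ (γ : F) ^ n = v + 1 ∧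
      (m : ZMod 18) = a ∧ (n : ZMod 18) = b) :
    ∃ m n : ℕ, (γ : F) ^ m = -(v+1) ∧ (γ : F) ^ n = -(v+1) + 1 ∧
      (m : ZMod 18) = b ∧ (n : ZMod 18) = a := by
  obtain ⟨m, mn, h1, h2, hma, hmnb⟩ := h
  refine ⟨j + mn, j + m, ?_, ?_, ?_, ?_⟩
  · rw [pow_add, hj, h2]; ring
  · rw [pow_add, hj, h1]; ring
  · push_cast [hj18, hmnb]; ring
  · push_cast [hj18, hma]; ring

lemma cyclo_swap (γ : Fˣ) (j : ℕ) (hj : (γ : F) ^ j = -1) (hj18 : ((j : ℕ) : ZMod 18) = 0)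
    (a b : ZMod 18) : cyclo γ 18 a b = cyclo γ 18 b a := by
  refine Nat.card_congr ⟨fun x => ⟨-(x.1+1), swap_step γ j hj hj18 a b x.1 x.2⟩,
    fun x => ⟨-(x.1+1), swap_step γ j hj hj18 b a x.1 x.2⟩,
    fun x => Subtype.ext (by ring), fun x => Subtype.ext (by ring)⟩

end Sym

lemma zpow_congr18 {ζ : ℂ} (h1 : ζ ^ (18:ℕ) = 1) (h0 : ζ ≠ 0) (m : ℕ) (j w : ℤ)
    (h : (m : ℤ) = j + 18 * w) : ζ ^ m = ζ ^ j := by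
  have h18 : ζ ^ ((18:ℤ)) = 1 := by
    rw [show (18:ℤ) = ((18:ℕ):ℤ) by norm_num, zpow_natCast, h1]
  have : ζ ^ (m : ℤ) = ζ ^ j := by
    rw [h, zpow_add₀ h0, zpow_mul, h18, one_zpow, mul_one]
  rw [← zpow_natCast, this]

def Ofs (i : ℕ × ℕ) : Finset (ZMod 18 × ZMod 18) :=
  { ((i.1 : ZMod 18), (i.2 : ZMod 18)), ((i.2 : ZMod 18), (i.1 : ZMod 18)),
    (-(i.1 : ZMod 18), (i.2 : ZMod 18) - (i.1 : ZMod 18)),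
    ((i.2 : ZMod 18) - (i.1 : ZMod 18), -(i.1 : ZMod 18)),
    ((i.1 : ZMod 18) - (i.2 : ZMod 18), -(i.2 : ZMod 18)),
    (-(i.2 : ZMod 18), (i.1 : ZMod 18) - (i.2 : ZMod 18)) }

def Mi : Multiset (ℕ × ℕ) :=
  (0,0) ::ₘ (6,12) ::ₘ ((Finset.Icc 1 17).val.map (fun b => (0, b))
    + (Finset.Icc 1 5).val.bind (fun a => (Finset.Icc (2*a) (17-a)).val.map (fun b => (a, b))))

set_option maxRecDepth 100000 in
set_option maxHeartbeats 4000000 in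
lemma Mi_bind : Mi.bind (fun i => (Ofs i).val) = (Finset.univ : Finset (ZMod 18 × ZMod 18)).val := by
  decide

lemma reindex {M : Type*} [AddCommMonoid M] (g : ZMod 18 × ZMod 18 → M) :
    (∑ p : ZMod 18 × ZMod 18, g p) =
      (∑ p ∈ Ofs (0,0), g p) + (∑ p ∈ Ofs (6,12), g p)
      + (∑ b ∈ Finset.Icc 1 17, ∑ p ∈ Ofs (0,b), g p)
      + (∑ a ∈ Finset.Icc 1 5, ∑ b ∈ Finset.Icc (2*a) (17-a), ∑ p ∈ Ofs (a,b), g p) := by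
  have key : ∑ p : ZMod 18 × ZMod 18, g p = ((Mi.bind (fun i => (Ofs i).val)).map g).sum := by
    rw [Mi_bind, Finset.sum]
  rw [key, Multiset.map_bind, Multiset.sum_bind, Mi]
  simp only [Multiset.map_cons, Multiset.sum_cons, Multiset.map_add, Multiset.sum_add,
    Multiset.map_map, Multiset.map_bind, Multiset.sum_bind, Function.comp]
  simp only [Finset.sum, Multiset.map_map, Function.comp]
  simp only [add_assoc]

lemma OfsA : (Ofs (0,0)).val = {((0:ZMod 18),(0:ZMod 18))} := by decide

lemma OfsB : (Ofs (6,12)).val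
    = ((6:ZMod 18),(12:ZMod 18)) ::ₘ {((12:ZMod 18),(6:ZMod 18))} := by decide

set_option maxHeartbeats 1000000 in
lemma OfsC : ∀ b ∈ Finset.Icc (1:ℕ) 17, (Ofs (0,b)).val =
    ((0:ZMod 18),(b:ZMod 18)) ::ₘ ((b:ZMod 18),(0:ZMod 18))
      ::ₘ {(-(b:ZMod 18), -(b:ZMod 18))} := by decide

set_option maxHeartbeats 2000000 in
lemma OfsD : ∀ a ∈ Finset.Icc (1:ℕ) 5, ∀ b ∈ Finset.Icc (2*a) (17-a), (Ofs (a,b)).val =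
    ((a:ZMod 18),(b:ZMod 18)) ::ₘ ((b:ZMod 18),(a:ZMod 18))
      ::ₘ (-(a:ZMod 18),(b:ZMod 18)-(a:ZMod 18)) ::ₘ ((b:ZMod 18)-(a:ZMod 18),-(a:ZMod 18))
      ::ₘ ((a:ZMod 18)-(b:ZMod 18),-(b:ZMod 18))
      ::ₘ {(-(b:ZMod 18),(a:ZMod 18)-(b:ZMod 18))} := by decide


/-- `J_18(1,n)` expressed via the minimal set of cyclotomic numbers of order 18,
in the case `k` even or `q = 2^r`. -/
theorem jacobi_eighteen_even_case
    {F : Type*} [Field F] [Fintype F] [DecidableEq F]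
    (p r k : ℕ) (hp : p.Prime) (hcard : Fintype.card F = p ^ r)
    (hek : Fintype.card F = 18 * k + 1)
    (hcase : Even k ∨ ∃ s : ℕ, Fintype.card F = 2 ^ s)
    (γ : Fˣ) (hγ : ∀ x : Fˣ, x ∈ Subgroup.zpowers γ)
    (ζ : ℂ) (hζ : IsPrimitiveRoot ζ 18)
    (χ : F → ℂ) (hχ0 : χ 0 = 0) (hχ : ∀ m : ℕ, χ ((γ : F) ^ m) = ζ ^ m)
    (n : ℕ) :
    (∑ v : F, χ v * (if v + 1 = 0 then 0 else χ (v + 1) ^ n)) =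
      (cyclo γ 18 0 0 : ℂ)
      + (cyclo γ 18 6 12 : ℂ) * (ζ ^ ((6 + 12 * n : ℕ) : ℤ) + ζ ^ ((12 + 6 * n : ℕ) : ℤ))
      + (∑ b ∈ Finset.Icc (1 : ℕ) 17, (cyclo γ 18 0 ((b : ℕ) : ZMod 18) : ℂ) *
          (ζ ^ ((b * n : ℕ) : ℤ) + ζ ^ ((b : ℕ) : ℤ) + ζ ^ (-((b : ℤ) * (n + 1)))))
      + (∑ a ∈ Finset.Icc (1 : ℕ) 5, ∑ b ∈ Finset.Icc (2 * a) (17 - a),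
          (cyclo γ 18 ((a : ℕ) : ZMod 18) ((b : ℕ) : ZMod 18) : ℂ) *
            (ζ ^ ((a : ℤ) * n + b) + ζ ^ ((a : ℤ) + b * n)
              + ζ ^ ((a : ℤ) - b * (n + 1)) + ζ ^ ((a : ℤ) * n - b * (n + 1))
              + ζ ^ ((b : ℤ) * n - a * (n + 1)) + ζ ^ ((b : ℤ) - a * (n + 1)))) := by
  classical
  have hcard2 : 1 < Fintype.card F := Fintype.one_lt_card
  have hk1 : 1 ≤ k := by omega
  have hord : orderOf γ = 18 * k := by
    have h1 := orderOf_eq_card_of_forall_mem_zpowers hγ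
    rw [Nat.card_units, Nat.card_eq_fintype_card] at h1
    omega
  have hζ18 : ζ ^ (18:ℕ) = 1 := hζ.pow_eq_one
  have hζ0 : ζ ≠ 0 := hζ.ne_zero (by norm_num)
  have hkeven : Even k := by
    rcases hcase with h | ⟨s, hs⟩
    · exact h
    · exfalso
      rcases Nat.eq_zero_or_pos s with rfl | hs1
      · simp at hs; omega
      · have h2 : 2 ∣ 2^s := dvd_pow_self 2 hs1.ne'
        rw [← hs] at h2; omega
  obtain ⟨k', hk'⟩ := hkeven
  have hj18 : ((9 * k : ℕ) : ZMod 18) = 0 := by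
    have h9 : (9 * k : ℕ) = 18 * k' := by omega
    rw [h9, Nat.cast_mul, ZMod.natCast_self, zero_mul]
  have hjval : (γ : F) ^ (9 * k) = -1 := by
    have hx2 : ((γ : F) ^ (9*k))^2 = 1 := by
      rw [← pow_mul]
      have h92 : 9*k*2 = 18*k := by ring
      rw [h92, ← hord, ← Units.val_pow_eq_pow_val, pow_orderOf_eq_one, Units.val_one]
    have hx1 : (γ : F) ^ (9*k) ≠ 1 := by
      intro h
      have hu : γ ^ (9*k) = 1 := Units.ext (by rw [Units.val_pow_eq_pow_val, h, Units.val_one])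
      have hdvd := orderOf_dvd_of_pow_eq_one hu
      rw [hord] at hdvd
      have := Nat.le_of_dvd (by omega) hdvd
      omega
    have hfact : ((γ : F) ^ (9*k) - 1) * ((γ : F) ^ (9*k) + 1) = 0 := by
      linear_combination hx2
    rcases mul_eq_zero.mp hfact with h | h
    · exact absurd (by linear_combination h) hx1
    · linear_combination h
  -- discrete log
  have hpow : ∀ x : Fˣ, ∃ m : ℕ, γ ^ m = x := by
    intro x
    have hfin : IsOfFinOrder γ := by
      rw [← orderOf_pos_iff]; exact orderOf_pos γ
    exact Submonoid.mem_powers_iff x γ |>.mp (hfin.mem_powers_iff_mem_zpowers.mpr (hγ x))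
  have hex : ∀ v : F, v ≠ 0 → ∃ m : ℕ, (γ : F) ^ m = v := by
    intro v hv
    obtain ⟨m, hm⟩ := hpow (Units.mk0 v hv)
    exact ⟨m, by rw [← Units.val_pow_eq_pow_val, hm]; rfl⟩
  set dlF : F → ℕ := fun v =>
    if h : ∃ m : ℕ, (γ : F) ^ m = v then Classical.choose h else 0 with hdlF
  have hdl : ∀ v : F, v ≠ 0 → (γ : F) ^ (dlF v) = v := by
    intro v hv
    simp only [hdlF]
    rw [dif_pos (hex v hv)]
    exact Classical.choose_spec (hex v hv)
  have hkey : ∀ m m' : ℕ, (γ : F) ^ m = (γ : F) ^ m' → ((m : ZMod 18)) = (m' : ZMod 18) := by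
    intro m m' h
    have hu : γ ^ m = γ ^ m' :=
      Units.ext (by rw [Units.val_pow_eq_pow_val, Units.val_pow_eq_pow_val]; exact h)
    have hmod := pow_eq_pow_iff_modEq.mp hu
    rw [hord] at hmod
    exact (ZMod.natCast_eq_natCast_iff _ _ _).2 (hmod.of_dvd ⟨k, rfl⟩)
  have hzeta : ∀ m : ℕ, ζ ^ m = ζ ^ ((m : ZMod 18)).val := by
    intro m
    conv_lhs => rw [← Nat.div_add_mod m 18]
    rw [pow_add, pow_mul, hζ18, one_pow, one_mul, ZMod.val_natCast]
  have hzeta' : ∀ m m' : ℕ, ((m : ZMod 18)) = (m' : ZMod 18) → ζ ^ m = ζ ^ m' := by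
    intro m m' h
    rw [hzeta m, hzeta m', h]
  set ind : F → ZMod 18 × ZMod 18 :=
    fun v => (((dlF v : ℕ) : ZMod 18), ((dlF (v+1) : ℕ) : ZMod 18)) with hind
  have hcyclo : ∀ y : ZMod 18 × ZMod 18,
      (cyclo γ 18 y.1 y.2 : ℕ)
        = (Finset.univ.filter (fun v : F => ind v = y ∧ (v ≠ 0 ∧ v + 1 ≠ 0))).card := by
    intro y
    rw [cyclo, Nat.card_eq_fintype_card, Fintype.card_subtype]
    congr 1
    ext v
    simp only [Finset.mem_filter, Finset.mem_univ, true_and]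
    constructor
    · rintro ⟨m, mn, h1, h2, hma, hmnb⟩
      have hv0 : v ≠ 0 := by rw [← h1, ← Units.val_pow_eq_pow_val]; exact Units.ne_zero _
      have hv1 : v + 1 ≠ 0 := by rw [← h2, ← Units.val_pow_eq_pow_val]; exact Units.ne_zero _
      refine ⟨?_, hv0, hv1⟩
      have c1 : ((dlF v : ℕ) : ZMod 18) = y.1 := by
        rw [hkey _ m ((hdl v hv0).trans h1.symm), hma]
      have c2 : ((dlF (v+1) : ℕ) : ZMod 18) = y.2 := by
        rw [hkey _ mn ((hdl (v+1) hv1).trans h2.symm), hmnb]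
      simp only [hind]
      rw [c1, c2]
    · rintro ⟨hy, hv0, hv1⟩
      simp only [hind] at hy
      refine ⟨dlF v, dlF (v+1), hdl v hv0, hdl (v+1) hv1, ?_, ?_⟩
      · rw [← hy]
      · rw [← hy]
  set g : ZMod 18 × ZMod 18 → ℂ :=
    fun y => (cyclo γ 18 y.1 y.2 : ℂ) * (ζ ^ (y.1.val) * ζ ^ (y.2.val * n)) with hg
  have hLHS : (∑ v : F, χ v * (if v + 1 = 0 then 0 else χ (v + 1) ^ n))
      = ∑ y : ZMod 18 × ZMod 18, g y := by
    rw [← Finset.sum_fiberwise Finset.univ ind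
      (fun v : F => χ v * (if v + 1 = 0 then 0 else χ (v + 1) ^ n))]
    apply Finset.sum_congr rfl
    intro y _
    have step1 : ∀ v ∈ Finset.univ.filter (fun v : F => ind v = y),
        χ v * (if v + 1 = 0 then 0 else χ (v + 1) ^ n)
          = (if (v ≠ 0 ∧ v + 1 ≠ 0) then ζ ^ (y.1.val) * ζ ^ (y.2.val * n) else 0) := by
      intro v hv
      rw [Finset.mem_filter] at hv
      obtain ⟨-, hvy⟩ := hv
      by_cases h0 : v = 0
      · subst h0
        simp [hχ0]
      · by_cases h1 : v + 1 = 0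
        · simp [h1, h0]
        · rw [if_neg h1, if_pos ⟨h0, h1⟩]
          have e1 : (γ : F) ^ (dlF v) = v := hdl v h0
          have e2 : (γ : F) ^ (dlF (v+1)) = v + 1 := hdl (v+1) h1
          have hχ1 : χ v = ζ ^ (dlF v) := by
            conv_lhs => rw [← e1]
            exact hχ _
          have hχ2 : χ (v+1) = ζ ^ (dlF (v+1)) := by
            conv_lhs => rw [← e2]
            exact hχ _
          rw [← hvy]
          simp only [hind]
          rw [hχ1, hχ2, hzeta (dlF v)]
          congr 1
          rw [← pow_mul]
          apply hzeta'
          rw [Nat.cast_mul, Nat.cast_mul, ZMod.natCast_zmod_val]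
    rw [Finset.sum_congr rfl step1, Finset.sum_ite, Finset.sum_const_zero, add_zero,
      Finset.sum_const, Finset.filter_filter, nsmul_eq_mul]
    simp only [hg]
    rw [hcyclo y]
  -- symmetry facts
  have hswap : ∀ x y : ZMod 18, cyclo γ 18 x y = cyclo γ 18 y x :=
    fun x y => cyclo_swap γ (9*k) hjval hj18 x y
  have hrot : ∀ x y : ZMod 18, cyclo γ 18 x y = cyclo γ 18 (-x) (y - x) :=
    fun x y => cyclo_rot γ (orderOf γ) (pow_orderOf_eq_one γ)
      (by rw [hord]; exact ⟨k, rfl⟩) (orderOf_pos γ) x y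
  -- group A
  have hA : (∑ q ∈ Ofs (0,0), g q) = (cyclo γ 18 0 0 : ℂ) := by
    rw [Finset.sum_eq_multiset_sum, OfsA]
    simp [hg]
  -- group B
  have hB : (∑ q ∈ Ofs (6,12), g q)
      = (cyclo γ 18 6 12 : ℂ) * (ζ ^ ((6 + 12 * n : ℕ) : ℤ) + ζ ^ ((12 + 6 * n : ℕ) : ℤ)) := by
    rw [Finset.sum_eq_multiset_sum, OfsB]
    simp only [Multiset.map_cons, Multiset.sum_cons, Multiset.map_singleton,
      Multiset.sum_singleton, hg]
    have e2 : cyclo γ 18 (12:ZMod 18) (6:ZMod 18) = cyclo γ 18 6 12 := (hswap 6 12).symm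
    have hv6 : ((6:ZMod 18)).val = 6 := by decide
    have hv12 : ((12:ZMod 18)).val = 12 := by decide
    rw [e2, hv6, hv12, zpow_natCast, zpow_natCast, pow_add, pow_add]
    ring
  -- group C
  have hC : ∀ b ∈ Finset.Icc (1:ℕ) 17, (∑ q ∈ Ofs (0,b), g q)
      = (cyclo γ 18 0 ((b : ℕ) : ZMod 18) : ℂ) *
          (ζ ^ ((b * n : ℕ) : ℤ) + ζ ^ ((b : ℕ) : ℤ) + ζ ^ (-((b : ℤ) * (n + 1)))) := by
    intro b hb
    rw [Finset.mem_Icc] at hb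
    rw [Finset.sum_eq_multiset_sum, OfsC b (Finset.mem_Icc.mpr hb)]
    simp only [Multiset.map_cons, Multiset.sum_cons, Multiset.map_singleton,
      Multiset.sum_singleton, hg]
    have hneg : -((b:ℕ) : ZMod 18) = (((18 - b : ℕ)) : ZMod 18) := by
      have h18 : (((18 - b : ℕ) + b : ℕ) : ZMod 18) = 0 := by
        rw [show (18 - b + b : ℕ) = 18 by omega, ZMod.natCast_self]
      rw [Nat.cast_add] at h18
      exact (eq_neg_of_add_eq_zero_left h18).symm
    have hv0 : ((0 : ZMod 18)).val = 0 := rfl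
    have hvb : (((b:ℕ)) : ZMod 18).val = b := ZMod.val_natCast_of_lt (by omega)
    have hvnb : (-((b:ℕ) : ZMod 18)).val = 18 - b := by
      rw [hneg]; exact ZMod.val_natCast_of_lt (by omega)
    have ec2 : cyclo γ 18 ((b:ℕ) : ZMod 18) (0 : ZMod 18)
        = cyclo γ 18 (0 : ZMod 18) ((b:ℕ) : ZMod 18) := (hswap _ _).symm
    have ec3 : cyclo γ 18 (-((b:ℕ) : ZMod 18)) (-((b:ℕ) : ZMod 18))
        = cyclo γ 18 (0 : ZMod 18) ((b:ℕ) : ZMod 18) := by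
      have h := hrot ((b:ℕ) : ZMod 18) (0 : ZMod 18)
      rw [zero_sub] at h
      exact h.symm.trans ec2
    rw [ec2, ec3, hv0, hvb, hvnb]
    simp only [zero_mul, pow_zero, one_mul, mul_one]
    simp only [← pow_add]
    have z3 : ζ ^ ((18 - b) + (18 - b) * n) = ζ ^ (-((b:ℤ) * (n+1))) :=
      zpow_congr18 hζ18 hζ0 _ _ (n+1)
        (by push_cast [Nat.cast_sub (show b ≤ 18 by omega)]; ring)
    rw [z3, ← zpow_natCast ζ (b*n), ← zpow_natCast ζ b]
    ring
  -- group D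
  have hD : ∀ a ∈ Finset.Icc (1:ℕ) 5, ∀ b ∈ Finset.Icc (2*a) (17-a), (∑ q ∈ Ofs (a,b), g q)
      = (cyclo γ 18 ((a : ℕ) : ZMod 18) ((b : ℕ) : ZMod 18) : ℂ) *
          (ζ ^ ((a : ℤ) * n + b) + ζ ^ ((a : ℤ) + b * n)
            + ζ ^ ((a : ℤ) - b * (n + 1)) + ζ ^ ((a : ℤ) * n - b * (n + 1))
            + ζ ^ ((b : ℤ) * n - a * (n + 1)) + ζ ^ ((b : ℤ) - a * (n + 1))) := by
    intro a ha b hb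
    rw [Finset.mem_Icc] at ha hb
    have hab : a < b := by omega
    rw [Finset.sum_eq_multiset_sum, OfsD a (Finset.mem_Icc.mpr ha) b (Finset.mem_Icc.mpr hb)]
    simp only [Multiset.map_cons, Multiset.sum_cons, Multiset.map_singleton,
      Multiset.sum_singleton, hg]
    have hneg : ∀ c : ℕ, c ≤ 18 → -((c:ℕ) : ZMod 18) = (((18 - c : ℕ)) : ZMod 18) := by
      intro c hc
      have h18 : (((18 - c : ℕ) + c : ℕ) : ZMod 18) = 0 := by
        rw [show (18 - c + c : ℕ) = 18 by omega, ZMod.natCast_self]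
      rw [Nat.cast_add] at h18
      exact (eq_neg_of_add_eq_zero_left h18).symm
    have hsub1 : ((b:ℕ) : ZMod 18) - ((a:ℕ) : ZMod 18) = (((b - a : ℕ)) : ZMod 18) :=
      (Nat.cast_sub hab.le).symm
    have hnega : -((a:ℕ) : ZMod 18) = (((18 - a : ℕ)) : ZMod 18) := hneg a (by omega)
    have hnegb : -((b:ℕ) : ZMod 18) = (((18 - b : ℕ)) : ZMod 18) := hneg b (by omega)
    have hsub2 : ((a:ℕ) : ZMod 18) - ((b:ℕ) : ZMod 18) = (((18 - (b - a) : ℕ)) : ZMod 18) := by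
      have h' : ((a:ℕ) : ZMod 18) - ((b:ℕ) : ZMod 18)
          = -(((b:ℕ) : ZMod 18) - ((a:ℕ) : ZMod 18)) := by ring
      rw [h', hsub1, hneg (b-a) (by omega)]
    have e2 : cyclo γ 18 ((b:ℕ) : ZMod 18) ((a:ℕ) : ZMod 18)
        = cyclo γ 18 ((a:ℕ) : ZMod 18) ((b:ℕ) : ZMod 18) := (hswap _ _).symm
    have e3 : cyclo γ 18 (-((a:ℕ) : ZMod 18)) (((b:ℕ) : ZMod 18) - ((a:ℕ) : ZMod 18))
        = cyclo γ 18 ((a:ℕ) : ZMod 18) ((b:ℕ) : ZMod 18) := (hrot _ _).symm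
    have e4 : cyclo γ 18 (((b:ℕ) : ZMod 18) - ((a:ℕ) : ZMod 18)) (-((a:ℕ) : ZMod 18))
        = cyclo γ 18 ((a:ℕ) : ZMod 18) ((b:ℕ) : ZMod 18) := (hswap _ _).trans e3
    have e5 : cyclo γ 18 (-((b:ℕ) : ZMod 18)) (((a:ℕ) : ZMod 18) - ((b:ℕ) : ZMod 18))
        = cyclo γ 18 ((a:ℕ) : ZMod 18) ((b:ℕ) : ZMod 18) := (hrot _ _).symm.trans e2
    have e6 : cyclo γ 18 (((a:ℕ) : ZMod 18) - ((b:ℕ) : ZMod 18)) (-((b:ℕ) : ZMod 18))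
        = cyclo γ 18 ((a:ℕ) : ZMod 18) ((b:ℕ) : ZMod 18) := (hswap _ _).trans e5
    rw [e2, e3, e4, e6, e5]
    have hva : (((a:ℕ)) : ZMod 18).val = a := ZMod.val_natCast_of_lt (by omega)
    have hvb : (((b:ℕ)) : ZMod 18).val = b := ZMod.val_natCast_of_lt (by omega)
    have hvna : (-((a:ℕ) : ZMod 18)).val = 18 - a := by
      rw [hnega]; exact ZMod.val_natCast_of_lt (by omega)
    have hvnb : (-((b:ℕ) : ZMod 18)).val = 18 - b := by
      rw [hnegb]; exact ZMod.val_natCast_of_lt (by omega)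
    have hvs1 : (((b:ℕ) : ZMod 18) - ((a:ℕ) : ZMod 18)).val = b - a := by
      rw [hsub1]; exact ZMod.val_natCast_of_lt (by omega)
    have hvs2 : (((a:ℕ) : ZMod 18) - ((b:ℕ) : ZMod 18)).val = 18 - (b - a) := by
      rw [hsub2]; exact ZMod.val_natCast_of_lt (by omega)
    rw [hva, hvb, hvna, hvnb, hvs1, hvs2]
    simp only [← pow_add]
    have z1 : ζ ^ (a + b * n) = ζ ^ ((a : ℤ) + b * n : ℤ) :=
      zpow_congr18 hζ18 hζ0 _ _ 0 (by push_cast; ring)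
    have z2 : ζ ^ (b + a * n) = ζ ^ ((a : ℤ) * n + b : ℤ) :=
      zpow_congr18 hζ18 hζ0 _ _ 0 (by push_cast; ring)
    have z3 : ζ ^ ((18 - a) + (b - a) * n) = ζ ^ ((b : ℤ) * n - a * (n + 1) : ℤ) :=
      zpow_congr18 hζ18 hζ0 _ _ 1
        (by push_cast [Nat.cast_sub (show a ≤ 18 by omega), Nat.cast_sub hab.le]; ring)
    have z4 : ζ ^ ((b - a) + (18 - a) * n) = ζ ^ ((b : ℤ) - a * (n + 1) : ℤ) :=
      zpow_congr18 hζ18 hζ0 _ _ (n : ℤ)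
        (by push_cast [Nat.cast_sub (show a ≤ 18 by omega), Nat.cast_sub hab.le]; ring)
    have z5 : ζ ^ ((18 - (b - a)) + (18 - b) * n) = ζ ^ ((a : ℤ) - b * (n + 1) : ℤ) :=
      zpow_congr18 hζ18 hζ0 _ _ ((n : ℤ) + 1)
        (by push_cast [Nat.cast_sub (show b - a ≤ 18 by omega), Nat.cast_sub hab.le,
              Nat.cast_sub (show b ≤ 18 by omega)]; ring)
    have z6 : ζ ^ ((18 - b) + (18 - (b - a)) * n) = ζ ^ ((a : ℤ) * n - b * (n + 1) : ℤ) :=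
      zpow_congr18 hζ18 hζ0 _ _ ((n : ℤ) + 1)
        (by push_cast [Nat.cast_sub (show b - a ≤ 18 by omega), Nat.cast_sub hab.le,
              Nat.cast_sub (show b ≤ 18 by omega)]; ring)
    rw [z1, z2, z3, z4, z5, z6]
    ring
  -- assemble
  rw [hLHS, reindex g, hA, hB, Finset.sum_congr rfl hC,
    Finset.sum_congr rfl (fun a ha => Finset.sum_congr rfl (hD a ha))]
end

section
/- If q = 18k+1 with k odd and q ≠ 2^r, then (0,9)_18 + 2(6,3)_18 + 3·(Σ_{b=0}^{8}(0,b)_18 + Σ_{b=10}^{17}(0,b)_18) + 6·(Σ_{b=0}^{8}(1,b)_18 + Σ_{b=12}^{17}(1,b)_18 + Σ_{b=0}^{7}(2,b)_18 + Σ_{b=14}^{17}(2,b)_18 + Σ_{b=0}^{6}(3,b)_18 + Σ_{b=16}^{17}(3,b)_18 + Σ_{b=0}^{5}(4,b)_18 + Σ_{b=1}^{3}(5,b)_18) = q - 2. -/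
set_option linter.unusedSectionVars false

section
variable {F : Type*} [Field F] [Fintype F] (γ : Fˣ) (k : ℕ)

lemma neg_one_pow (hk : Odd k) (hek : Fintype.card F = 18 * k + 1)
    (hγ : ∀ x : Fˣ, x ∈ Subgroup.zpowers γ) :
    (γ : F) ^ (9 * k) = -1 ∧ ((9 * k : ℕ) : ZMod 18) = 9 := by
  classical
  have hk0 : k ≠ 0 := by rintro rfl; simp at hk
  have hord : orderOf γ = 18 * k := by
    rw [orderOf_eq_card_of_forall_mem_zpowers hγ, Nat.card_eq_fintype_card,
      Fintype.card_units, hek]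
    omega
  have hsq : (γ : F) ^ (9 * k) * (γ : F) ^ (9 * k) = 1 := by
    rw [← pow_add]
    have h2 : 9 * k + 9 * k = 18 * k := by ring
    rw [h2, ← hord]
    have := pow_orderOf_eq_one γ
    calc (γ : F) ^ orderOf γ = ((γ ^ orderOf γ : Fˣ) : F) := by push_cast; rfl
      _ = ((1 : Fˣ) : F) := by rw [this]
      _ = 1 := rfl
  have hne : (γ : F) ^ (9 * k) ≠ 1 := by
    intro h
    have hu : γ ^ (9 * k) = 1 := Units.ext (by push_cast [h]; rfl)
    have hdvd := orderOf_dvd_of_pow_eq_one hu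
    rw [hord] at hdvd
    have := Nat.le_of_dvd (by omega) hdvd
    omega
  have hneg : (γ : F) ^ (9 * k) = -1 := ((mul_self_eq_one_iff.mp hsq).resolve_left hne)
  refine ⟨hneg, ?_⟩
  obtain ⟨j, hj⟩ := hk
  have h3 : 9 * k = 18 * j + 9 := by omega
  rw [h3]; push_cast
  rw [show (18 : ZMod 18) = 0 by decide]
  ring
end

section
variable {F : Type*} [Field F] [Fintype F] (γ : Fˣ) (k : ℕ)

lemma step1 (hk : k ≠ 0) (hek : Fintype.card F = 18 * k + 1) (a b : ZMod 18) (v : F)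
    (h : ∃ m n : ℕ, (γ : F) ^ m = v ∧ (γ : F) ^ n = v + 1 ∧
      (m : ZMod 18) = a ∧ (n : ZMod 18) = b) :
    ∃ m n : ℕ, (γ : F) ^ m = v⁻¹ ∧ (γ : F) ^ n = v⁻¹ + 1 ∧
      (m : ZMod 18) = -a ∧ (n : ZMod 18) = b - a := by
  obtain ⟨m, n, hm, hn, ha, hb⟩ := h
  have hγ0 : (γ : F) ≠ 0 := γ.ne_zero
  have hv0 : v ≠ 0 := hm ▸ pow_ne_zero _ hγ0
  have h1 : (γ : F) ^ (Fintype.card F - 1) = 1 := FiniteField.pow_card_sub_one_eq_one _ hγ0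
  set Q := Fintype.card F with hQ
  have hinv : (γ : F) ^ (m * (Q - 2)) = v⁻¹ := by
    refine eq_inv_of_mul_eq_one_left ?_
    rw [← hm, ← pow_add]
    have h3 : m * (Q - 2) + m = (Q - 1) * m := by
      have h4 : Q - 2 + 1 = Q - 1 := by omega
      calc m * (Q - 2) + m = (Q - 2 + 1) * m := by ring
        _ = (Q - 1) * m := by rw [h4]
    rw [h3, pow_mul, h1, one_pow]
  have hcast : ((Q - 2 : ℕ) : ZMod 18) = -1 := by
    have h2 : (Q - 2 : ℕ) = 18 * (k - 1) + 17 := by omega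
    rw [h2]; push_cast
    rw [show (18 : ZMod 18) = 0 by decide]
    ring_nf
    decide
  refine ⟨m * (Q - 2), n + m * (Q - 2), hinv, ?_, ?_, ?_⟩
  · rw [pow_add, hn, hinv]
    field_simp; ring
  · push_cast [hcast, ha]; ring
  · push_cast [hcast, ha, hb]; ring

lemma cyclo_rel1 (hk : k ≠ 0) (hek : Fintype.card F = 18 * k + 1) (a b : ZMod 18) :
    cyclo γ 18 a b = cyclo γ 18 (-a) (b - a) := by
  refine Nat.card_congr ⟨fun v => ⟨(v : F)⁻¹, step1 γ k hk hek a b v v.2⟩,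
    fun v => ⟨(v : F)⁻¹, ?_⟩, fun v => Subtype.ext (inv_inv _), fun v => Subtype.ext (inv_inv _)⟩
  have := step1 γ k hk hek (-a) (b - a) v v.2
  simpa using this
end
section
variable {F : Type*} [Field F] [Fintype F] (γ : Fˣ) (k : ℕ)

lemma step2 (t : ℕ) (ht : (γ : F) ^ t = -1) (ht18 : ((t : ℕ) : ZMod 18) = 9)
    (a b : ZMod 18) (v : F)
    (h : ∃ m n : ℕ, (γ : F) ^ m = v ∧ (γ : F) ^ n = v + 1 ∧
      (m : ZMod 18) = a ∧ (n : ZMod 18) = b) :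
    ∃ m n : ℕ, (γ : F) ^ m = -1 - v ∧ (γ : F) ^ n = (-1 - v) + 1 ∧
      (m : ZMod 18) = b + 9 ∧ (n : ZMod 18) = a + 9 := by
  obtain ⟨m, n, hm, hn, ha, hb⟩ := h
  refine ⟨t + n, t + m, ?_, ?_, ?_, ?_⟩
  · rw [pow_add, ht, hn]; ring
  · rw [pow_add, ht, hm]; ring
  · push_cast [ht18, hb]; ring
  · push_cast [ht18, ha]; ring

lemma cyclo_rel2 (hk : Odd k) (hek : Fintype.card F = 18 * k + 1)
    (hγ : ∀ x : Fˣ, x ∈ Subgroup.zpowers γ) (a b : ZMod 18) :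
    cyclo γ 18 a b = cyclo γ 18 (b + 9) (a + 9) := by
  obtain ⟨ht, ht18⟩ := neg_one_pow γ k hk hek hγ
  refine Nat.card_congr ⟨fun v => ⟨-1 - (v : F), step2 γ _ ht ht18 a b v v.2⟩,
    fun v => ⟨-1 - (v : F), ?_⟩, fun v => Subtype.ext (by push_cast; ring),
    fun v => Subtype.ext (by push_cast; ring)⟩
  have := step2 γ _ ht ht18 (b + 9) (a + 9) v v.2
  have h18 : (18 : ZMod 18) = 0 := by decide
  have e1 : (a + 9) + 9 = a := by linear_combination h18
  have e2 : (b + 9) + 9 = b := by linear_combination h18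
  rw [e1, e2] at this
  exact this
end

open Finset in
lemma cyclo_total {F : Type*} [Field F] [Fintype F] (γ : Fˣ) (k : ℕ)
    (hk : k ≠ 0) (hek : Fintype.card F = 18 * k + 1)
    (hγ : ∀ x : Fˣ, x ∈ Subgroup.zpowers γ) :
    ∑ ab : ZMod 18 × ZMod 18, cyclo γ 18 ab.1 ab.2 = Fintype.card F - 2 := by
  classical
  -- discrete log
  have hex : ∀ v : F, v ≠ 0 → ∃ m : ℕ, (γ : F) ^ m = v := by
    intro v hv
    obtain ⟨m, hm⟩ := (mem_powers_iff_mem_zpowers).mpr (hγ (Units.mk0 v hv))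
    refine ⟨m, ?_⟩
    have := congrArg (Units.val) hm
    simpa using this
  set dl : F → ℕ := fun v => if h : ∃ m : ℕ, (γ : F) ^ m = v then h.choose else 0 with hdl
  have hdlspec : ∀ v : F, v ≠ 0 → (γ : F) ^ (dl v) = v := by
    intro v hv
    have h := hex v hv
    simp only [hdl, dif_pos h]
    exact h.choose_spec
  have hord : orderOf γ = 18 * k := by
    rw [orderOf_eq_card_of_forall_mem_zpowers hγ, Nat.card_eq_fintype_card,
      Fintype.card_units, hek]; omega
  have hmod : ∀ m m' : ℕ, (γ : F) ^ m = (γ : F) ^ m' → (m : ZMod 18) = (m' : ZMod 18) := by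
    intro m m' h
    rw [ZMod.natCast_eq_natCast_iff]
    have hu : γ ^ m = γ ^ m' := Units.ext (by push_cast [h]; rfl)
    have := pow_eq_pow_iff_modEq.mp hu
    rw [hord] at this
    exact this.of_dvd ⟨k, rfl⟩
  set f : F → ZMod 18 × ZMod 18 := fun v => ((dl v : ZMod 18), (dl (v + 1) : ZMod 18)) with hf
  set s : Finset F := univ.filter (fun v => v ≠ 0 ∧ v + 1 ≠ 0) with hs
  -- characterize the predicate
  have hchar : ∀ (a b : ZMod 18) (v : F),
      (∃ m n : ℕ, (γ : F) ^ m = v ∧ (γ : F) ^ n = v + 1 ∧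
        (m : ZMod 18) = a ∧ (n : ZMod 18) = b) ↔ (v ∈ s ∧ f v = (a, b)) := by
    intro a b v
    constructor
    · rintro ⟨m, n, hm, hn, ha, hb⟩
      have hv0 : v ≠ 0 := hm ▸ pow_ne_zero _ γ.ne_zero
      have hv1 : v + 1 ≠ 0 := hn ▸ pow_ne_zero _ γ.ne_zero
      refine ⟨by simp [hs, hv0, hv1], ?_⟩
      have e1 : (dl v : ZMod 18) = a := by
        rw [← ha]; exact hmod _ _ (by rw [hdlspec v hv0, hm])
      have e2 : (dl (v + 1) : ZMod 18) = b := by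
        rw [← hb]; exact hmod _ _ (by rw [hdlspec _ hv1, hn])
      simp [hf, e1, e2]
    · rintro ⟨hvs, hfv⟩
      simp only [hs, mem_filter] at hvs
      obtain ⟨-, hv0, hv1⟩ := hvs
      refine ⟨dl v, dl (v + 1), hdlspec v hv0, hdlspec _ hv1, ?_, ?_⟩
      · exact congrArg Prod.fst hfv
      · exact congrArg Prod.snd hfv
  have hcy : ∀ a b : ZMod 18, cyclo γ 18 a b
      = (s.filter (fun v => f v = (a, b))).card := by
    intro a b
    rw [cyclo]
    rw [Nat.card_eq_fintype_card]
    rw [Fintype.card_subtype]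
    congr 1
    ext v
    simp only [mem_filter, mem_univ, true_and, hchar a b v]
  have hfib : s.card = ∑ ab : ZMod 18 × ZMod 18, (s.filter (fun v => f v = ab)).card :=
    card_eq_sum_card_fiberwise (fun x _ => mem_univ _)
  have hsum : ∑ ab : ZMod 18 × ZMod 18, cyclo γ 18 ab.1 ab.2 = s.card := by
    rw [hfib]
    exact Finset.sum_congr rfl (fun ab _ => by rw [hcy ab.1 ab.2])
  rw [hsum]
  -- card of s
  have h01 : (0 : F) ≠ -1 := by
    intro h
    exact one_ne_zero (α := F) (by linear_combination h)
  have hns : s = univ \ {0, -1} := by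
    ext v
    simp only [hs, mem_filter, mem_univ, true_and, mem_sdiff, mem_insert, mem_singleton,
      not_or]
    constructor
    · rintro ⟨h0, h1⟩
      exact ⟨h0, fun h => h1 (by rw [h]; ring)⟩
    · rintro ⟨h0, h1⟩
      exact ⟨h0, fun hc => h1 (by linear_combination hc)⟩
  rw [hns, Finset.card_sdiff_of_subset (by simp), Finset.card_univ]
  have hc2 : ({0, -1} : Finset F).card = 2 := by
    rw [Finset.card_insert_of_notMem (by simp only [Finset.mem_singleton]; exact h01), Finset.card_singleton]
  rw [hc2]

def orb6 (p : ZMod 18 × ZMod 18) : List (ZMod 18 × ZMod 18) :=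
  [p, (-p.1, p.2 - p.1), (p.2 + 9, p.1 + 9), (9 - p.2, p.1 - p.2),
   (p.2 - p.1 + 9, 9 - p.1), (p.1 - p.2 + 9, -p.2)]

def canon (p : ZMod 18 × ZMod 18) : ZMod 18 × ZMod 18 :=
  ((orb6 p).argmin (fun q => q.1.val * 18 + q.2.val)).getD p

lemma canon_mem (p : ZMod 18 × ZMod 18) : canon p ∈ orb6 p := by
  unfold canon
  rcases h : (orb6 p).argmin (fun q => q.1.val * 18 + q.2.val) with _ | q
  · rw [h]; simp [orb6]
  · rw [h]; exact List.argmin_mem h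

lemma g_canon (g : ZMod 18 × ZMod 18 → ℕ)
    (h2 : ∀ a b : ZMod 18, g (a, b) = g (-a, b - a))
    (h3 : ∀ a b : ZMod 18, g (a, b) = g (b + 9, a + 9)) :
    ∀ p, g (canon p) = g p := by
  have h18 : (18 : ZMod 18) = 0 := by decide
  rintro ⟨a, b⟩
  have hm := canon_mem (a, b)
  simp only [orb6, List.mem_cons, List.mem_singleton, List.not_mem_nil, or_false] at hm
  have e4 : g (a, b) = g (9 - b, a - b) := by
    rw [h3 a b, h2 (b + 9) (a + 9)]
    congr 1
    have c1 : -(b + 9) = 9 - b := by linear_combination -h18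
    have c2 : a + 9 - (b + 9) = a - b := by ring
    rw [c1, c2]
  have e5 : g (a, b) = g (b - a + 9, 9 - a) := by
    rw [h2 a b, h3 (-a) (b - a)]
    congr 1
    have c2 : -a + 9 = 9 - a := by ring
    rw [c2]
  have e6 : g (a, b) = g (a - b + 9, -b) := by
    rw [e4, h3 (9 - b) (a - b)]
    congr 1
    have c2 : 9 - b + 9 = -b := by linear_combination h18
    rw [c2]
  rcases hm with h | h | h | h | h | h <;> rw [h]
  · exact (h2 a b).symm
  · exact (h3 a b).symm
  · exact e4.symm
  · exact e5.symm
  · exact e6.symm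


def Mreps : Multiset (ZMod 18 × ZMod 18) :=
  Multiset.replicate 1 ((0 : ZMod 18), (9 : ZMod 18)) + Multiset.replicate 2 ((6 : ZMod 18), (3 : ZMod 18)) + Multiset.replicate 3 ((0 : ZMod 18), (0 : ZMod 18)) + Multiset.replicate 3 ((0 : ZMod 18), (1 : ZMod 18)) + Multiset.replicate 3 ((0 : ZMod 18), (2 : ZMod 18)) + Multiset.replicate 3 ((0 : ZMod 18), (3 : ZMod 18)) + Multiset.replicate 3 ((0 : ZMod 18), (4 : ZMod 18)) + Multiset.replicate 3 ((0 : ZMod 18), (5 : ZMod 18)) + Multiset.replicate 3 ((0 : ZMod 18), (6 : ZMod 18)) + Multiset.replicate 3 ((0 : ZMod 18), (7 : ZMod 18)) + Multiset.replicate 3 ((0 : ZMod 18), (8 : ZMod 18)) + Multiset.replicate 3 ((0 : ZMod 18), (10 : ZMod 18)) + Multiset.replicate 3 ((0 : ZMod 18), (11 : ZMod 18)) + Multiset.replicate 3 ((0 : ZMod 18), (12 : ZMod 18)) + Multiset.replicate 3 ((0 : ZMod 18), (13 : ZMod 18)) + Multiset.replicate 3 ((0 : ZMod 18), (14 : ZMod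 18)) + Multiset.replicate 3 ((0 : ZMod 18), (15 : ZMod 18)) + Multiset.replicate 3 ((0 : ZMod 18), (16 : ZMod 18)) + Multiset.replicate 3 ((0 : ZMod 18), (17 : ZMod 18)) + Multiset.replicate 6 ((1 : ZMod 18), (0 : ZMod 18)) + Multiset.replicate 6 ((1 : ZMod 18), (1 : ZMod 18)) + Multiset.replicate 6 ((1 : ZMod 18), (2 : ZMod 18)) + Multiset.replicate 6 ((1 : ZMod 18), (3 : ZMod 18)) + Multiset.replicate 6 ((1 : ZMod 18), (4 : ZMod 18)) + Multiset.replicate 6 ((1 : ZMod 18), (5 : ZMod 18)) + Multiset.replicate 6 ((1 : ZMod 18), (6 : ZMod 18)) + Multiset.replicate 6 ((1 : ZMod 18), (7 : ZMod 18)) + Multiset.replicate 6 ((1 : ZMod 18), (8 : ZMod 18)) + Multiset.replicate 6 ((1 : ZMod 18), (12 : ZMod 18)) + Multiset.replicate 6 ((1 : ZMod 18), (13 : ZMod 18)) + Multiset.replicate 6 ((1 : ZMod 18), (14 : ZMod 18)) + Multiset.replicate 6 ((1 : ZMod 18), (15 : ZMod 18)) + Multiset.replicate 6 ((1 : ZMod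 18), (16 : ZMod 18)) + Multiset.replicate 6 ((1 : ZMod 18), (17 : ZMod 18)) + Multiset.replicate 6 ((2 : ZMod 18), (0 : ZMod 18)) + Multiset.replicate 6 ((2 : ZMod 18), (1 : ZMod 18)) + Multiset.replicate 6 ((2 : ZMod 18), (2 : ZMod 18)) + Multiset.replicate 6 ((2 : ZMod 18), (3 : ZMod 18)) + Multiset.replicate 6 ((2 : ZMod 18), (4 : ZMod 18)) + Multiset.replicate 6 ((2 : ZMod 18), (5 : ZMod 18)) + Multiset.replicate 6 ((2 : ZMod 18), (6 : ZMod 18)) + Multiset.replicate 6 ((2 : ZMod 18), (7 : ZMod 18)) + Multiset.replicate 6 ((2 : ZMod 18), (14 : ZMod 18)) + Multiset.replicate 6 ((2 : ZMod 18), (15 : ZMod 18)) + Multiset.replicate 6 ((2 : ZMod 18), (16 : ZMod 18)) + Multiset.replicate 6 ((2 : ZMod 18), (17 : ZMod 18)) + Multiset.replicate 6 ((3 : ZMod 18), (0 : ZMod 18)) + Multiset.replicate 6 ((3 : ZMod 18), (1 : ZMod 18)) + Multiset.replicate 6 ((3 : ZMod 18), (2 : ZMod 18)) + Multiset.replicate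 6 ((3 : ZMod 18), (3 : ZMod 18)) + Multiset.replicate 6 ((3 : ZMod 18), (4 : ZMod 18)) + Multiset.replicate 6 ((3 : ZMod 18), (5 : ZMod 18)) + Multiset.replicate 6 ((3 : ZMod 18), (6 : ZMod 18)) + Multiset.replicate 6 ((3 : ZMod 18), (16 : ZMod 18)) + Multiset.replicate 6 ((3 : ZMod 18), (17 : ZMod 18)) + Multiset.replicate 6 ((4 : ZMod 18), (0 : ZMod 18)) + Multiset.replicate 6 ((4 : ZMod 18), (1 : ZMod 18)) + Multiset.replicate 6 ((4 : ZMod 18), (2 : ZMod 18)) + Multiset.replicate 6 ((4 : ZMod 18), (3 : ZMod 18)) + Multiset.replicate 6 ((4 : ZMod 18), (4 : ZMod 18)) + Multiset.replicate 6 ((4 : ZMod 18), (5 : ZMod 18)) + Multiset.replicate 6 ((5 : ZMod 18), (1 : ZMod 18)) + Multiset.replicate 6 ((5 : ZMod 18), (2 : ZMod 18)) + Multiset.replicate 6 ((5 : ZMod 18), (3 : ZMod 18))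

open Finset in
set_option maxRecDepth 10000 in
lemma multiset_eq : (Finset.univ.val : Multiset (ZMod 18 × ZMod 18)).map canon = Mreps.map canon := by
  decide

/-- Weighted sum of representative cyclotomic numbers of order 18 equals `q-2`
(case `k` odd and `q ≠ 2^r`). -/
theorem sum_cyclo_eighteen_odd_case
    {F : Type*} [Field F] [Fintype F]
    (p r k : ℕ) (hp : p.Prime) (hpodd : Odd p) (hcard : Fintype.card F = p ^ r)
    (hek : Fintype.card F = 18 * k + 1) (hk : Odd k)
    (hq2 : ∀ s : ℕ, Fintype.card F ≠ 2 ^ s)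
    (γ : Fˣ) (hγ : ∀ x : Fˣ, x ∈ Subgroup.zpowers γ) :
    cyclo γ 18 0 9 + 2 * cyclo γ 18 6 3
      + 3 * (∑ b ∈ Finset.Icc (0 : ℕ) 8, cyclo γ 18 0 ((b : ℕ) : ZMod 18)
          + ∑ b ∈ Finset.Icc (10 : ℕ) 17, cyclo γ 18 0 ((b : ℕ) : ZMod 18))
      + 6 * (∑ b ∈ Finset.Icc (0 : ℕ) 8, cyclo γ 18 1 ((b : ℕ) : ZMod 18)
          + ∑ b ∈ Finset.Icc (12 : ℕ) 17, cyclo γ 18 1 ((b : ℕ) : ZMod 18)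
          + ∑ b ∈ Finset.Icc (0 : ℕ) 7, cyclo γ 18 2 ((b : ℕ) : ZMod 18)
          + ∑ b ∈ Finset.Icc (14 : ℕ) 17, cyclo γ 18 2 ((b : ℕ) : ZMod 18)
          + ∑ b ∈ Finset.Icc (0 : ℕ) 6, cyclo γ 18 3 ((b : ℕ) : ZMod 18)
          + ∑ b ∈ Finset.Icc (16 : ℕ) 17, cyclo γ 18 3 ((b : ℕ) : ZMod 18)
          + ∑ b ∈ Finset.Icc (0 : ℕ) 5, cyclo γ 18 4 ((b : ℕ) : ZMod 18)
          + ∑ b ∈ Finset.Icc (1 : ℕ) 3, cyclo γ 18 5 ((b : ℕ) : ZMod 18))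
      = Fintype.card F - 2 := by
  have hk0 : k ≠ 0 := by rintro rfl; simp at hk
  have h2 : ∀ a b : ZMod 18, (fun q : ZMod 18 × ZMod 18 => cyclo γ 18 q.1 q.2) (a, b)
      = (fun q : ZMod 18 × ZMod 18 => cyclo γ 18 q.1 q.2) (-a, b - a) :=
    fun a b => cyclo_rel1 γ k hk0 hek a b
  have h3 : ∀ a b : ZMod 18, (fun q : ZMod 18 × ZMod 18 => cyclo γ 18 q.1 q.2) (a, b)
      = (fun q : ZMod 18 × ZMod 18 => cyclo γ 18 q.1 q.2) (b + 9, a + 9) :=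
    fun a b => cyclo_rel2 γ k hk hek hγ a b
  have hgc := g_canon (fun q : ZMod 18 × ZMod 18 => cyclo γ 18 q.1 q.2) h2 h3
  have htot := cyclo_total γ k hk0 hek hγ
  rw [← htot]
  have hrhs : ∑ ab : ZMod 18 × ZMod 18, cyclo γ 18 ab.1 ab.2
      = (Mreps.map (fun q : ZMod 18 × ZMod 18 => cyclo γ 18 q.1 q.2)).sum := by
    calc ∑ ab : ZMod 18 × ZMod 18, cyclo γ 18 ab.1 ab.2
        = ∑ ab : ZMod 18 × ZMod 18,
            (fun q : ZMod 18 × ZMod 18 => cyclo γ 18 q.1 q.2) (canon ab) :=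
          Finset.sum_congr rfl (fun ab _ => (hgc ab).symm)
      _ = (((Finset.univ.val : Multiset (ZMod 18 × ZMod 18)).map canon).map
            (fun q : ZMod 18 × ZMod 18 => cyclo γ 18 q.1 q.2)).sum := by
          rw [Multiset.map_map]; rfl
      _ = ((Mreps.map canon).map (fun q : ZMod 18 × ZMod 18 => cyclo γ 18 q.1 q.2)).sum := by
          rw [multiset_eq]
      _ = (Mreps.map (fun q : ZMod 18 × ZMod 18 =>
            (fun w : ZMod 18 × ZMod 18 => cyclo γ 18 w.1 w.2) (canon q))).sum := by
          rw [Multiset.map_map]; rfl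
      _ = (Mreps.map (fun q : ZMod 18 × ZMod 18 => cyclo γ 18 q.1 q.2)).sum := by
          rw [Multiset.map_congr rfl (fun q _ => hgc q)]
  rw [hrhs]
  have e1 : Finset.Icc (0:ℕ) 8 = {0,1,2,3,4,5,6,7,8} := by decide
  have e2 : Finset.Icc (10:ℕ) 17 = {10,11,12,13,14,15,16,17} := by decide
  have e3 : Finset.Icc (12:ℕ) 17 = {12,13,14,15,16,17} := by decide
  have e4 : Finset.Icc (0:ℕ) 7 = {0,1,2,3,4,5,6,7} := by decide
  have e5 : Finset.Icc (14:ℕ) 17 = {14,15,16,17} := by decide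
  have e6 : Finset.Icc (0:ℕ) 6 = {0,1,2,3,4,5,6} := by decide
  have e7 : Finset.Icc (16:ℕ) 17 = {16,17} := by decide
  have e8 : Finset.Icc (0:ℕ) 5 = {0,1,2,3,4,5} := by decide
  have e9 : Finset.Icc (1:ℕ) 3 = {1,2,3} := by decide
  rw [e1, e2, e3, e4, e5, e6, e7, e8, e9]
  simp only [Mreps, Multiset.map_add, Multiset.sum_add, Multiset.map_replicate,
    Multiset.sum_replicate, smul_eq_mul]
  norm_num [Finset.sum_insert, Finset.sum_singleton]
  push_cast
  ring
end
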